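/- arXiv:2006.02559 — 7 statements merged into one kernel-verified Lean document; each statement's English description precedes it below -/
import Mathlib

section
/- Let g : ℝⁿ → ℝⁿ be a ρ-averaged operator for some ρ ∈ (0,1) with a nonempty fixed-point set. Then for every x, ‖f(g^[k](x))‖ → 0 as k → ∞, where f(x) = g(x) - x. -/
/-!
If `p` is a fixed point of `g = (1 - ρ) • id + ρ • R`, then `R` fixes `p` as well, and the
identity `‖(1 - ρ) • u + ρ • v‖² = (1 - ρ)‖u‖² + ρ‖v‖² - ρ(1 - ρ)‖u - v‖²` turns the
nonexpansiveness of `R` into the Fejér inequality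
`ρ‖g y - p‖² + (1 - ρ)‖g y - y‖² ≤ ρ‖y - p‖²`. Along the orbit `xₖ = g^[k] x` the distances
`ρ‖xₖ - p‖²` thus decrease by at least `(1 - ρ)‖f xₖ‖²` per step, so `∑ ‖f xₖ‖²` is bounded by
`ρ‖x - p‖² / (1 - ρ)` and its terms tend to zero.
-/

open Filter Topology

theorem tendsto_zero_of_add_mul_le {a b : ℕ → ℝ} {c : ℝ} (ha : ∀ k, 0 ≤ a k) (hb : ∀ k, 0 ≤ b k)
    (hc : 0 < c) (h : ∀ k, a (k + 1) + c * b k ≤ a k) : Tendsto b atTop (𝓝 0) := by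
  have hsum : Summable fun k => c * b k := by
    refine summable_of_sum_range_le (c := a 0) (fun k => mul_nonneg hc.le (hb k)) fun n => ?_
    calc ∑ k ∈ Finset.range n, c * b k
        ≤ ∑ k ∈ Finset.range n, (a k - a (k + 1)) :=
          Finset.sum_le_sum fun k _ => by linarith [h k]
      _ = a 0 - a n := Finset.sum_range_sub' a n
      _ ≤ a 0 := by linarith [ha n]
  simpa [hc.ne'] using hsum.tendsto_atTop_zero.const_mul c⁻¹

section Averaged

variable {E : Type*} [NormedAddCommGroup E] [InnerProductSpace ℝ E]

theorem norm_one_sub_smul_add_smul_sq (u v : E) (ρ : ℝ) :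
    ‖(1 - ρ) • u + ρ • v‖ ^ 2 = (1 - ρ) * ‖u‖ ^ 2 + ρ * ‖v‖ ^ 2 - ρ * (1 - ρ) * ‖u - v‖ ^ 2 := by
  rw [norm_add_sq_real, norm_sub_sq_real, real_inner_smul_left, real_inner_smul_right,
    norm_smul, norm_smul, mul_pow, mul_pow, Real.norm_eq_abs, Real.norm_eq_abs, sq_abs, sq_abs]
  ring

theorem mul_norm_sq_add_norm_sq_le_of_averaged {g R : E → E} {ρ : ℝ} {p y : E}
    (hg : g y = (1 - ρ) • y + ρ • R y) (hR : ‖R y - p‖ ≤ ‖y - p‖) :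
    ρ * ‖g y - p‖ ^ 2 + (1 - ρ) * ‖g y - y‖ ^ 2 ≤ ρ * ‖y - p‖ ^ 2 := by
  have hgp : g y - p = (1 - ρ) • (y - p) + ρ • (R y - p) := by rw [hg]; module
  have hgy : g y - y = ρ • ((R y - p) - (y - p)) := by rw [hg]; module
  rw [hgp, hgy, norm_one_sub_smul_add_smul_sq, norm_smul, mul_pow, Real.norm_eq_abs, sq_abs,
    norm_sub_rev (R y - p)]
  have : ρ ^ 2 * ‖R y - p‖ ^ 2 ≤ ρ ^ 2 * ‖y - p‖ ^ 2 := by gcongr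
  linarith

end Averaged

theorem stmt_2 (n : ℕ) (g : EuclideanSpace ℝ (Fin n) → EuclideanSpace ℝ (Fin n))
    (ρ : ℝ) (hρ : ρ ∈ Set.Ioo (0 : ℝ) 1)
    (hav : ∃ R : EuclideanSpace ℝ (Fin n) → EuclideanSpace ℝ (Fin n),
      (∀ x y, ‖R x - R y‖ ≤ ‖x - y‖) ∧ ∀ x, g x = (1 - ρ) • x + ρ • R x)
    (hfix : ∃ x, g x = x)
    (f : EuclideanSpace ℝ (Fin n) → EuclideanSpace ℝ (Fin n))
    (hf : ∀ x, f x = g x - x) :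
    ∀ x, Filter.Tendsto (fun k => ‖f (g^[k] x)‖) Filter.atTop (nhds 0) := by
  obtain ⟨R, hR, hg⟩ := hav
  obtain ⟨p, hp⟩ := hfix
  obtain ⟨hρ0, hρ1⟩ := hρ
  have hRp : R p = p := by
    have h : ρ • (R p - p) = g p - p := by rw [hg]; module
    rw [hp, sub_self] at h
    exact sub_eq_zero.mp ((smul_eq_zero.mp h).resolve_left hρ0.ne')
  intro x
  have hsq : Tendsto (fun k => ‖f (g^[k] x)‖ ^ 2) atTop (𝓝 0) := by
    refine tendsto_zero_of_add_mul_le (a := fun k => ρ * ‖g^[k] x - p‖ ^ 2)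
      (fun k => by positivity) (fun k => by positivity) (sub_pos.mpr hρ1) fun k => ?_
    have := mul_norm_sq_add_norm_sq_le_of_averaged (hg (g^[k] x)) (hRp ▸ hR (g^[k] x) p)
    simpa only [Function.iterate_succ_apply', hf] using this
  simpa [Real.sqrt_sq (norm_nonneg _)] using hsq.sqrt
end

section
/- Let f⁰,...,fᵐ ∈ ℝⁿ with ‖f⁰‖ ≤ ‖fⁱ‖ for all i, ‖f⁰‖ > 0, let λ > 0, c ∈ (0,1), and let α* minimize α ↦ ‖f⁰ + Σᵢ₌₁ᵐ αᵢ(fⁱ - f⁰)‖² + λ‖α‖². Then for any convex-combination weight vector giving r = (1 - mγ)‖f⁰‖ + γΣᵢ₌₁ᵐ‖fⁱ‖ with γ ∈ (0, 1/(m+1)), the predicted reduction pred = r - c‖f⁰ + Σᵢ αᵢ*(fⁱ - f⁰)‖ is strictly positive. -/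
theorem stmt_4 (n m : ℕ) (f : Fin (m + 1) → EuclideanSpace ℝ (Fin n))
    (hmin : ∀ i, ‖f 0‖ ≤ ‖f i‖) (hpos : 0 < ‖f 0‖)
    (lam γ c : ℝ) (hlam : 0 < lam)
    (hc : c ∈ Set.Ioo (0 : ℝ) 1) (hγ : γ ∈ Set.Ioo (0 : ℝ) (1 / (m + 1)))
    (fhat : EuclideanSpace ℝ (Fin m) → EuclideanSpace ℝ (Fin n))
    (hfhat : ∀ α, fhat α = f 0 + ∑ i : Fin m, α i • (f i.succ - f 0))
    (αs : EuclideanSpace ℝ (Fin m))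
    (hαs : ∀ β, ‖fhat αs‖ ^ 2 + lam * ‖αs‖ ^ 2 ≤ ‖fhat β‖ ^ 2 + lam * ‖β‖ ^ 2)
    (r : ℝ) (hr : r = (1 - m * γ) * ‖f 0‖ + γ * ∑ i : Fin m, ‖f i.succ‖) :
    0 < r - c * ‖fhat αs‖ := by
  have h0 : fhat 0 = f 0 := by
    rw [hfhat]; simp
  have hkey := hαs 0
  rw [h0] at hkey
  simp only [norm_zero] at hkey
  have hsq : ‖fhat αs‖ ^ 2 ≤ ‖f 0‖ ^ 2 := by nlinarith [norm_nonneg αs, sq_nonneg ‖αs‖]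
  have hle : ‖fhat αs‖ ≤ ‖f 0‖ := by
    nlinarith [norm_nonneg (fhat αs), norm_nonneg (f 0)]
  have hsum : (m : ℝ) * ‖f 0‖ ≤ ∑ i : Fin m, ‖f i.succ‖ := by
    calc (m : ℝ) * ‖f 0‖ = ∑ _i : Fin m, ‖f 0‖ := by simp [mul_comm]
    _ ≤ ∑ i : Fin m, ‖f i.succ‖ := Finset.sum_le_sum fun i _ => hmin i.succ
  obtain ⟨hγ0, hγ1⟩ := hγ
  obtain ⟨hc0, hc1⟩ := hc
  have hrge : ‖f 0‖ ≤ r := by nlinarith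
  nlinarith
end

section
/- Let 0 ≤ κ < η < 1, m ∈ ℕ, and let ν̄ = (1-η)/(1-η^{m+1}) · η^m · (η - κ). Suppose a sequence of nonnegative numbers (a_k) satisfies, for all k ≥ ℓ, a_{k+1} ≤ κ · min{a_{k-m},...,a_k} + ν̄ · Σᵢ₌₀ᵐ a_{k-i}. Then there exists C > 0 such that a_k ≤ C η^k for all k ≥ ℓ, i.e., (a_k) converges r-linearly to zero with rate η. -/
/-!
The constant `ν̄` is chosen so that the geometric sequence `η ^ k` satisfies the recurrence with
equality once the window minimum is replaced by the newest term `a k`, which can only enlarge the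
right-hand side. By strong induction, any bound `a k ≤ C * η ^ k` on the initial window
`ℓ - m, …, ℓ` then propagates to all `k ≥ ℓ`, and a finite window always admits such a `C`.
-/

open Finset

theorem geom_window_sum_eq {K : Type*} [Field K] {η : K} {m n : ℕ} (hη : η ^ (m + 1) ≠ 1)
    (hmn : m ≤ n) :
    (1 - η) / (1 - η ^ (m + 1)) * η ^ m * ∑ i ∈ range (m + 1), η ^ (n - i) = η ^ n := by
  have hη1 : η ≠ 1 := by rintro rfl; simp at hη
  have hsum : ∑ i ∈ range (m + 1), η ^ (n - i) = η ^ (n - m) * ∑ i ∈ range (m + 1), η ^ i := by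
    rw [← sum_range_reflect, mul_sum]
    refine sum_congr rfl fun i hi => ?_
    rw [← pow_add]
    congr 1
    have := mem_range.mp hi
    omega
  have hpow : η ^ n = η ^ m * η ^ (n - m) := by rw [← pow_add, Nat.add_sub_cancel' hmn]
  rw [hsum, geom_sum_eq hη1, hpow]
  field_simp [sub_ne_zero.mpr hη1, sub_ne_zero.mpr hη.symm]
  ring

theorem pow_succ_eq_window_recurrence {K : Type*} [Field K] {κ η : K} {m k : ℕ}
    (hη : η ^ (m + 1) ≠ 1) (hmk : m ≤ k) :
    κ * η ^ k + (1 - η) / (1 - η ^ (m + 1)) * η ^ m * (η - κ) *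
      ∑ i ∈ range (m + 1), η ^ (k - i) = η ^ (k + 1) := by
  rw [mul_right_comm, geom_window_sum_eq hη hmk]
  ring

theorem le_of_window_recurrence {a b : ℕ → ℝ} {κ ν : ℝ} (hκ : 0 ≤ κ) (hν : 0 ≤ ν) {m ℓ : ℕ}
    (ha : ∀ k, ℓ ≤ k → a (k + 1) ≤ κ * a k + ν * ∑ i ∈ range (m + 1), a (k - i))
    (hb : ∀ k, ℓ ≤ k → κ * b k + ν * ∑ i ∈ range (m + 1), b (k - i) ≤ b (k + 1))
    (hab : ∀ k ∈ Icc (ℓ - m) ℓ, a k ≤ b k) :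
    ∀ k, ℓ - m ≤ k → a k ≤ b k := by
  intro k
  induction k using Nat.strong_induction_on with
  | _ k ih =>
    intro hk
    rcases le_or_gt k ℓ with hkℓ | hℓk
    · exact hab k (mem_Icc.mpr ⟨hk, hkℓ⟩)
    obtain ⟨n, rfl⟩ : ∃ n, k = n + 1 := ⟨k - 1, by omega⟩
    have hn : ℓ ≤ n := by omega
    have hsum : ∑ i ∈ range (m + 1), a (n - i) ≤ ∑ i ∈ range (m + 1), b (n - i) :=
      sum_le_sum fun i hi => ih (n - i) (by omega) (by have := mem_range.mp hi; omega)
    calc a (n + 1) ≤ κ * a n + ν * ∑ i ∈ range (m + 1), a (n - i) := ha n hn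
      _ ≤ κ * b n + ν * ∑ i ∈ range (m + 1), b (n - i) := by
          gcongr
          exact ih n (by omega) (by omega)
      _ ≤ b (n + 1) := hb n hn

theorem Finset.exists_pos_le_mul_pow (s : Finset ℕ) (a : ℕ → ℝ) {η : ℝ} (hη : 0 < η) :
    ∃ C > 0, ∀ k ∈ s, a k ≤ C * η ^ k := by
  obtain ⟨M, hM⟩ := (s.image fun k => a k / η ^ k).bddAbove
  refine ⟨max M 1, by positivity, fun k hk => ?_⟩
  have hk : a k / η ^ k ≤ M := hM (mem_coe.mpr (mem_image_of_mem _ hk))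
  rw [div_le_iff₀ (pow_pos hη k)] at hk
  exact hk.trans (mul_le_mul_of_nonneg_right (le_max_left M 1) (pow_pos hη k).le)

theorem stmt_8_general (a : ℕ → ℝ)
    (κ η : ℝ) (hκ0 : 0 ≤ κ) (hκη : κ < η) (hη1 : η < 1)
    (m ℓ : ℕ) (hmℓ : m ≤ ℓ)
    (ν : ℝ) (hν : ν = (1 - η) / (1 - η ^ (m + 1)) * η ^ m * (η - κ))
    (hrec : ∀ k, ℓ ≤ k →
      a (k + 1) ≤ κ * ((Finset.range (m + 1)).inf' Finset.nonempty_range_add_one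
          (fun i => a (k - i))) + ν * ∑ i ∈ Finset.range (m + 1), a (k - i)) :
    ∃ C > 0, ∀ k, ℓ ≤ k → a k ≤ C * η ^ k := by
  have hη0 : 0 < η := hκ0.trans_lt hκη
  have hηm : η ^ (m + 1) < 1 := pow_lt_one₀ hη0.le hη1 m.succ_ne_zero
  have hν0 : 0 ≤ ν := by
    have := sub_pos.mpr hηm
    have := sub_pos.mpr hκη
    rw [hν]
    positivity
  obtain ⟨C, hC, hbase⟩ := (Icc (ℓ - m) ℓ).exists_pos_le_mul_pow a hη0
  refine ⟨C, hC, fun k hk => le_of_window_recurrence hκ0 hν0 (fun n hn => ?_) (fun n hn => ?_)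
    hbase k (by omega)⟩
  · exact (hrec n hn).trans (by gcongr; exact inf'_le _ (mem_range.mpr m.succ_pos))
  · rw [← mul_sum, hν, ← pow_succ_eq_window_recurrence (κ := κ) hηm.ne (hmℓ.trans hn)]
    exact le_of_eq (by ring)

theorem stmt_8 (a : ℕ → ℝ) (ha : ∀ k, 0 ≤ a k)
    (κ η : ℝ) (hκ0 : 0 ≤ κ) (hκη : κ < η) (hη1 : η < 1)
    (m ℓ : ℕ) (hmℓ : m ≤ ℓ)
    (ν : ℝ) (hν : ν = (1 - η) / (1 - η ^ (m + 1)) * η ^ m * (η - κ))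
    (hrec : ∀ k, ℓ ≤ k →
      a (k + 1) ≤ κ * ((Finset.range (m + 1)).inf' Finset.nonempty_range_add_one
          (fun i => a (k - i))) + ν * ∑ i ∈ Finset.range (m + 1), a (k - i)) :
    ∃ C > 0, ∀ k, ℓ ≤ k → a k ≤ C * η ^ k :=
  stmt_8_general a κ η hκ0 hκη hη1 m ℓ hmℓ ν hν hrec
end

section
/- Let g : ℝⁿ → ℝⁿ be differentiable at x* with g(x*) = x*, let x⁰,...,xᵐ ∈ ℝⁿ, and ν ∈ ℝ^{m+1} with Σᵢνᵢ = 1 and ‖ν‖_∞ ≤ B. With x̂ = Σνᵢxⁱ and ĝ = Σνᵢg(xⁱ), one has ‖g(x̂) - ĝ‖ ≤ ‖Σᵢ νᵢ [g'(x*)(xⁱ - x*) + g(x*) - g(xⁱ)]‖ + ε(‖x̂ - x*‖)‖x̂ - x*‖, where ε(t) → 0 as t → 0 comes from the first-order expansion of g at x*; in particular ‖g(x̂) - ĝ‖ = o(Σᵢ ‖xⁱ - x*‖) as all xⁱ → x* with ν bounded. -/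
/-!
Since the weights sum to one, `g(x̂) - ĝ` splits into the first-order remainder of `g` at `x*`
evaluated at `x̂`, plus the weighted sum of the linearization errors at the points `xⁱ`
(the linear part `A(x̂ - x*)` is the same weighted sum of the `A(xⁱ - x*)`). With bounded weights,
`x̂` is as close to `x*` as we like once all `xⁱ` are, and there the remainder is at most
`δ ‖x̂ - x*‖`.
-/

section AffineCombination

variable {ι R E F : Type*} [Fintype ι] [Ring R] [AddCommGroup E] [Module R E]
  [AddCommGroup F] [Module R F]

theorem sum_smul_sub_of_sum_eq_one {ν : ι → R} (hν : ∑ i, ν i = 1) (x : ι → E) (c : E) :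
    ∑ i, ν i • x i - c = ∑ i, ν i • (x i - c) := by
  simp only [smul_sub, Finset.sum_sub_distrib, ← Finset.sum_smul, hν, one_smul]

theorem sub_sum_smul_eq_remainder_add_sum {M : Type*} [FunLike M E F] [LinearMapClass M R E F]
    {ν : ι → R} (hν : ∑ i, ν i = 1) (g : E → F) (A : M) (x : ι → E) (c : E) :
    g (∑ i, ν i • x i) - ∑ i, ν i • g (x i) =
      (g (∑ i, ν i • x i) - g c - A (∑ i, ν i • x i - c)) +
        ∑ i, ν i • (A (x i - c) + g c - g (x i)) := by
  have hlin : ∑ i, ν i • A (x i - c) = A (∑ i, ν i • x i - c) := by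
    simp only [sum_smul_sub_of_sum_eq_one hν, map_sum, map_smul]
  have hconst : ∑ i, ν i • g c = g c := by rw [← Finset.sum_smul, hν, one_smul]
  simp only [smul_add, smul_sub, Finset.sum_add_distrib, Finset.sum_sub_distrib, hlin, hconst]
  abel

end AffineCombination

theorem dist_sum_smul_le_of_abs_le {ι E : Type*} [Fintype ι] [SeminormedAddCommGroup E]
    [NormedSpace ℝ E] {ν : ι → ℝ} (hν : ∑ i, ν i = 1) {B r : ℝ} (hB : ∀ i, |ν i| ≤ B)
    {x : ι → E} {c : E} (hx : ∀ i, dist (x i) c ≤ r) :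
    dist (∑ i, ν i • x i) c ≤ Fintype.card ι * (B * r) := by
  rw [dist_eq_norm, sum_smul_sub_of_sum_eq_one hν]
  calc ‖∑ i, ν i • (x i - c)‖ ≤ ∑ i, ‖ν i • (x i - c)‖ := norm_sum_le _ _
    _ ≤ ∑ _i : ι, B * r := by
        gcongr with i
        rw [norm_smul, Real.norm_eq_abs, ← dist_eq_norm]
        exact mul_le_mul (hB i) (hx i) dist_nonneg ((abs_nonneg _).trans (hB i))
    _ = Fintype.card ι * (B * r) := by simp

theorem stmt_13_general (n m : ℕ)
    (g : EuclideanSpace ℝ (Fin n) → EuclideanSpace ℝ (Fin n))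
    (xstar : EuclideanSpace ℝ (Fin n))
    (A : EuclideanSpace ℝ (Fin n) →L[ℝ] EuclideanSpace ℝ (Fin n))
    (hdiff : HasFDerivAt g A xstar) (B : ℝ) :
    ∀ δ > (0 : ℝ), ∃ r > (0 : ℝ),
      ∀ (x : Fin (m + 1) → EuclideanSpace ℝ (Fin n)) (ν : Fin (m + 1) → ℝ),
        (∑ i, ν i = 1) → (∀ i, |ν i| ≤ B) → (∀ i, ‖x i - xstar‖ ≤ r) →
        ‖g (∑ i, ν i • x i) - ∑ i, ν i • g (x i)‖ ≤
          ‖∑ i, ν i • (A (x i - xstar) + g xstar - g (x i))‖ +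
            δ * ‖(∑ i, ν i • x i) - xstar‖ := by
  intro δ hδ
  obtain ⟨ε, hε, hremainder⟩ := Metric.eventually_nhds_iff.1 (hdiff.isLittleO.def hδ)
  obtain ⟨r, hr, hrε⟩ : ∃ r > (0 : ℝ), (m + 1) * ((|B| + 1) * r) = ε :=
    ⟨ε / ((m + 1) * (|B| + 1)), by positivity, by field_simp⟩
  refine ⟨r, hr, fun x ν hν hB hx => ?_⟩
  have hclose : dist (∑ i, ν i • x i) xstar < ε :=
    calc dist (∑ i, ν i • x i) xstar ≤ (m + 1) * (B * r) := by
          simpa using dist_sum_smul_le_of_abs_le hν hB (fun i => (dist_eq_norm _ _).trans_le (hx i))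
      _ < ε := by
          rw [← hrε]
          gcongr
          linarith [le_abs_self B]
  rw [sub_sum_smul_eq_remainder_add_sum hν g A x xstar]
  linarith [norm_add_le (g (∑ i, ν i • x i) - g xstar - A (∑ i, ν i • x i - xstar))
    (∑ i, ν i • (A (x i - xstar) + g xstar - g (x i))), hremainder hclose]

theorem stmt_13 (n m : ℕ)
    (g : EuclideanSpace ℝ (Fin n) → EuclideanSpace ℝ (Fin n))
    (xstar : EuclideanSpace ℝ (Fin n)) (hfix : g xstar = xstar)
    (A : EuclideanSpace ℝ (Fin n) →L[ℝ] EuclideanSpace ℝ (Fin n))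
    (hdiff : HasFDerivAt g A xstar) (B : ℝ) :
    ∀ δ > (0 : ℝ), ∃ r > (0 : ℝ),
      ∀ (x : Fin (m + 1) → EuclideanSpace ℝ (Fin n)) (ν : Fin (m + 1) → ℝ),
        (∑ i, ν i = 1) → (∀ i, |ν i| ≤ B) → (∀ i, ‖x i - xstar‖ ≤ r) →
        ‖g (∑ i, ν i • x i) - ∑ i, ν i • g (x i)‖ ≤
          ‖∑ i, ν i • (A (x i - xstar) + g xstar - g (x i))‖ +
            δ * ‖(∑ i, ν i • x i) - xstar‖ :=
  stmt_13_general n m g xstar A hdiff B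
end

section
/- Let D ∈ ℝ^{p×n}, K ∈ ℝ^{n×n} with K^T K invertible, ξ > 0, and M = D^T D + ξ^{-1} K^T K. Then T := D M^{-1} D^T satisfies (I + ξ D (K^T K)^{-1} D^T)^{-1} = I - T, and the spectrum of T lies in [0, 1 - 1/(1 + ξ‖D (K^T K)^{-1} D^T‖)]; in particular the spectral radius of T is strictly less than 1. -/
/-!
With `A = Kᵀ K` and `B = D A⁻¹ Dᵀ`, the Woodbury identity gives
`(1 + ξ B)⁻¹ = 1 - D (Dᵀ D + ξ⁻¹ A)⁻¹ Dᵀ = 1 - T`. Since `B` is positive semidefinite, its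
spectrum lies in `[0, ‖B‖]`, and spectral mapping for `t ↦ 1 - (1 + ξ t)⁻¹`, which is monotone
on `[0, ∞)`, puts the spectrum of `T` in `[0, 1 - 1 / (1 + ξ ‖B‖)]`.
-/

open Matrix Pointwise

namespace spectrum

variable {𝕜 A : Type*} [Field 𝕜] [Ring A] [Algebra 𝕜 A]

theorem one_sub_ringInverse_one_add_smul_subset {b : A} {ξ : 𝕜} (hξ : ξ ≠ 0)
    (hb : IsUnit (1 + ξ • b)) :
    spectrum 𝕜 (1 - Ring.inverse (1 + ξ • b)) ⊆
      (fun t => 1 - (1 + ξ * t)⁻¹) '' spectrum 𝕜 b := by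
  obtain ⟨u, hu⟩ := hb
  -- `σ (1 - u⁻¹) = 1 - (σ u)⁻¹` and `σ u = 1 + ξ • σ b`
  intro μ hμ
  rw [← hu, Ring.inverse_unit, ← map_one (algebraMap 𝕜 A), ← singleton_sub_eq] at hμ
  obtain ⟨_, rfl, ν, hν, rfl⟩ := hμ
  have hνinv : ν⁻¹ ∈ spectrum 𝕜 (1 + ξ • b) := by
    rw [← hu, ← inv_inv (spectrum 𝕜 (u : A)), spectrum.map_inv]
    simpa using hν
  have hsmul : spectrum 𝕜 (ξ • b) = ξ • spectrum 𝕜 b := unit_smul_eq_smul b (Units.mk0 ξ hξ)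
  rw [← map_one (algebraMap 𝕜 A), ← singleton_add_eq, hsmul] at hνinv
  obtain ⟨_, rfl, _, ⟨t, ht, rfl⟩, hνt⟩ := hνinv
  refine ⟨t, ht, ?_⟩
  simp only [smul_eq_mul] at hνt
  simp [hνt]

end spectrum

namespace Matrix

variable {m n 𝕜 : Type*} [Fintype m] [DecidableEq m] [Fintype n] [DecidableEq n] [Field 𝕜]

theorem inv_one_add_smul_mul_inv_mul {A : Matrix n n 𝕜} (D : Matrix m n 𝕜) (E : Matrix n m 𝕜)
    {ξ : 𝕜} (hξ : ξ ≠ 0) (hA : IsUnit A) (hM : IsUnit (E * D + ξ⁻¹ • A)) :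
    (1 + ξ • (D * A⁻¹ * E))⁻¹ = 1 - D * (E * D + ξ⁻¹ • A)⁻¹ * E := by
  have hAdet : IsUnit A.det := (isUnit_iff_isUnit_det A).mp hA
  have hC : IsUnit (ξ • A⁻¹) := (isUnit_nonsing_inv_iff.mpr hA).smul (Units.mk0 ξ hξ)
  have hCinv : (ξ • A⁻¹)⁻¹ = ξ⁻¹ • A := by
    refine inv_eq_left_inv ?_
    rw [smul_mul_smul_comm, inv_mul_cancel₀ hξ, mul_nonsing_inv A hAdet, one_smul]
  have := add_mul_mul_inv_eq_sub 1 D (ξ • A⁻¹) E isUnit_one hC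
    (by rwa [hCinv, inv_one, Matrix.mul_one, add_comm])
  simpa [hCinv, add_comm (ξ⁻¹ • A), Matrix.mul_smul, Matrix.smul_mul, Matrix.mul_assoc] using this

theorem PosSemidef.spectrum_subset_Icc_norm {B : Matrix n n ℝ} (hB : B.PosSemidef) :
    spectrum ℝ B ⊆ Set.Icc 0 ‖toEuclideanCLM (𝕜 := ℝ) B‖ := by
  intro t ht
  refine ⟨(posSemidef_iff_isHermitian_and_spectrum_nonneg.mp hB).2 ht, ?_⟩
  -- `norm_le_norm_of_mem` needs `NormOneClass`, i.e. a nonempty index type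
  rcases isEmpty_or_nonempty n with _ | _
  · simp [spectrum.of_subsingleton] at ht
  rw [← AlgEquiv.spectrum_eq (toEuclideanCLM (n := n) (𝕜 := ℝ))] at ht
  exact (le_abs_self t).trans (spectrum.norm_le_norm_of_mem ht)

end Matrix

theorem one_sub_inv_one_add_mul_mem_Icc {ξ t c : ℝ} (hξ : 0 < ξ) (ht : t ∈ Set.Icc 0 c) :
    1 - (1 + ξ * t)⁻¹ ∈ Set.Icc 0 (1 - 1 / (1 + ξ * c)) := by
  have h₀ : 1 ≤ 1 + ξ * t := le_add_of_nonneg_right (mul_nonneg hξ.le ht.1)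
  have h₁ : 1 + ξ * t ≤ 1 + ξ * c := by gcongr; exact ht.2
  constructor
  · simpa using inv_le_one_of_one_le₀ h₀
  · rw [one_div]
    gcongr

theorem spectralRadius_le_ofReal_of_spectrum_subset_Icc {A : Type*} [Ring A] [Algebra ℝ A] {a : A}
    {r : ℝ} (h : spectrum ℝ a ⊆ Set.Icc 0 r) : spectralRadius ℝ a ≤ ENNReal.ofReal r :=
  iSup₂_le fun t ht => by
    rw [← enorm_eq_nnnorm, Real.enorm_eq_ofReal_abs, abs_of_nonneg (h ht).1]
    exact ENNReal.ofReal_le_ofReal (h ht).2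

theorem stmt_16 (p n : ℕ)
    (D : Matrix (Fin p) (Fin n) ℝ) (K : Matrix (Fin n) (Fin n) ℝ)
    (hK : IsUnit (Kᵀ * K)) (ξ : ℝ) (hξ : 0 < ξ)
    (M : Matrix (Fin n) (Fin n) ℝ) (hM : M = Dᵀ * D + ξ⁻¹ • (Kᵀ * K))
    (T : Matrix (Fin p) (Fin p) ℝ) (hT : T = D * M⁻¹ * Dᵀ) :
    (1 + ξ • (D * (Kᵀ * K)⁻¹ * Dᵀ))⁻¹ = 1 - T ∧
      spectrum ℝ T ⊆ Set.Icc 0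
        (1 - 1 / (1 + ξ * ‖Matrix.toEuclideanCLM (𝕜 := ℝ) (D * (Kᵀ * K)⁻¹ * Dᵀ)‖)) ∧
      spectralRadius ℝ T < 1 := by
  set B := D * (Kᵀ * K)⁻¹ * Dᵀ
  have hKK : (Kᵀ * K).PosDef := by
    simpa using (posSemidef_conjTranspose_mul_self K).posDef_iff_isUnit.mpr hK
  have hB : B.PosSemidef := by simpa using hKK.inv.posSemidef.mul_mul_conjTranspose_same D
  subst hM
  have hMunit : IsUnit (Dᵀ * D + ξ⁻¹ • (Kᵀ * K)) := by
    have hDD : (Dᵀ * D).PosSemidef := by simpa using posSemidef_conjTranspose_mul_self D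
    exact (PosDef.posSemidef_add hDD (hKK.smul (inv_pos.mpr hξ))).isUnit
  have hinv : (1 + ξ • B)⁻¹ = 1 - T := by
    rw [hT]
    exact inv_one_add_smul_mul_inv_mul D Dᵀ hξ.ne' hK hMunit
  have hspec : spectrum ℝ T ⊆ Set.Icc 0 (1 - 1 / (1 + ξ * ‖toEuclideanCLM (𝕜 := ℝ) B‖)) := by
    have hunit : IsUnit (1 + ξ • B) := (PosDef.one.add_posSemidef (hB.smul hξ.le)).isUnit
    rw [← sub_sub_cancel 1 T, ← hinv, nonsing_inv_eq_ringInverse]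
    intro μ hμ
    obtain ⟨t, ht, rfl⟩ := spectrum.one_sub_ringInverse_one_add_smul_subset hξ.ne' hunit hμ
    exact one_sub_inv_one_add_mul_mem_Icc hξ (hB.spectrum_subset_Icc_norm ht)
  refine ⟨hinv, hspec, (spectralRadius_le_ofReal_of_spectrum_subset_Icc hspec).trans_lt ?_⟩
  exact ENNReal.ofReal_lt_one.mpr (sub_lt_self 1 (by positivity))
end

section
/- Let R¹ : ℝ^q → ℝ^q be c₁-Lipschitz with c₁ ∈ [0,1) and R² : ℝ^q → ℝ^q nonexpansive. Define g : ℝ^{2q} → ℝ^{2q} by g(v₁, v₂) = ½(R²(v₂) + v₁, R¹(v₁) + v₂). Then g is Lipschitz continuous with constant √(3 + c₁²)/2 < 1. -/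
/-!
If the two input blocks move by `a` and `b`, the first output block moves by at most `(b + a)/2`
and the second by at most `(c₁ a + b)/2`. The sum of the squares of these bounds is at most
`(3 + c₁²)/4 · (a² + b²)`, the gap being `(2a - (1 + c₁) b)²/8 + ((1 - c₁) b)²/8`.
-/

open WithLp

theorem sq_add_add_mul_add_sq_le (a b c : ℝ) :
    (b + a) ^ 2 + (c * a + b) ^ 2 ≤ (3 + c ^ 2) * (a ^ 2 + b ^ 2) := by
  nlinarith [sq_nonneg (2 * a - (1 + c) * b), sq_nonneg ((1 - c) * b)]

theorem WithLp.prod_dist_sq_eq_of_L2 {α β : Type*} [SeminormedAddCommGroup α]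
    [SeminormedAddCommGroup β] (x y : WithLp 2 (α × β)) :
    dist x y ^ 2 = dist x.fst y.fst ^ 2 + dist x.snd y.snd ^ 2 := by
  rw [prod_dist_eq_of_L2, Real.sq_sqrt (by positivity)]

section

variable {E : Type*} [NormedAddCommGroup E] [NormedSpace ℝ E]

noncomputable def swapMidpoint (R₁ R₂ : E → E) (v : WithLp 2 (E × E)) : WithLp 2 (E × E) :=
  toLp 2 (midpoint ℝ (R₂ v.snd) v.fst, midpoint ℝ (R₁ v.fst) v.snd)

theorem dist_swapMidpoint_le {R₁ R₂ : E → E} {c : ℝ}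
    (hR₁ : ∀ x y, dist (R₁ x) (R₁ y) ≤ c * dist x y) (hR₂ : ∀ x y, dist (R₂ x) (R₂ y) ≤ dist x y)
    (v w : WithLp 2 (E × E)) :
    dist (swapMidpoint R₁ R₂ v) (swapMidpoint R₁ R₂ w) ≤ √(3 + c ^ 2) / 2 * dist v w := by
  set a := dist v.fst w.fst
  set b := dist v.snd w.snd
  have h₁ : dist (swapMidpoint R₁ R₂ v).fst (swapMidpoint R₁ R₂ w).fst ≤ (b + a) / 2 :=
    (dist_midpoint_midpoint_le _ _ _ _).trans (by gcongr; exact hR₂ _ _)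
  have h₂ : dist (swapMidpoint R₁ R₂ v).snd (swapMidpoint R₁ R₂ w).snd ≤ (c * a + b) / 2 :=
    (dist_midpoint_midpoint_le _ _ _ _).trans (by gcongr; exact hR₁ _ _)
  refine le_of_pow_le_pow_left₀ two_ne_zero (by positivity) ?_
  calc dist (swapMidpoint R₁ R₂ v) (swapMidpoint R₁ R₂ w) ^ 2
      ≤ ((b + a) / 2) ^ 2 + ((c * a + b) / 2) ^ 2 := by
        rw [prod_dist_sq_eq_of_L2]
        gcongr
    _ ≤ (3 + c ^ 2) / 4 * (a ^ 2 + b ^ 2) := by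
        linarith [sq_add_add_mul_add_sq_le a b c]
    _ = (√(3 + c ^ 2) / 2 * dist v w) ^ 2 := by
        rw [mul_pow, div_pow, Real.sq_sqrt (by positivity), prod_dist_sq_eq_of_L2]
        ring

end

theorem stmt_18 (q : ℕ)
    (R1 R2 : EuclideanSpace ℝ (Fin q) → EuclideanSpace ℝ (Fin q))
    (c1 : ℝ) (hc10 : 0 ≤ c1) (hc11 : c1 < 1)
    (hR1 : ∀ x y, ‖R1 x - R1 y‖ ≤ c1 * ‖x - y‖)
    (hR2 : ∀ x y, ‖R2 x - R2 y‖ ≤ ‖x - y‖)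
    (g : WithLp 2 (EuclideanSpace ℝ (Fin q) × EuclideanSpace ℝ (Fin q)) →
      WithLp 2 (EuclideanSpace ℝ (Fin q) × EuclideanSpace ℝ (Fin q)))
    (hg : ∀ v, g v =
      (WithLp.equiv 2 (EuclideanSpace ℝ (Fin q) × EuclideanSpace ℝ (Fin q))).symm
        (((1 : ℝ) / 2) • (R2 ((WithLp.equiv 2 _) v).2 + ((WithLp.equiv 2 _) v).1),
         ((1 : ℝ) / 2) • (R1 ((WithLp.equiv 2 _) v).1 + ((WithLp.equiv 2 _) v).2))) :
    (∀ v w, ‖g v - g w‖ ≤ (Real.sqrt (3 + c1 ^ 2) / 2) * ‖v - w‖) ∧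
      Real.sqrt (3 + c1 ^ 2) / 2 < 1 := by
  have hg_eq : g = swapMidpoint R1 R2 := by
    funext v
    rw [hg v, swapMidpoint, midpoint_eq_smul_add, midpoint_eq_smul_add, invOf_eq_inv, ← one_div]
    rfl
  refine ⟨fun v w => ?_, ?_⟩
  · simp only [← dist_eq_norm] at hR1 hR2 ⊢
    rw [hg_eq]
    exact dist_swapMidpoint_le hR1 hR2 v w
  · rw [div_lt_one two_pos, Real.sqrt_lt' two_pos]
    nlinarith
end

section
/- Let F : ℝⁿ → ℝ be convex and differentiable with L-Lipschitz gradient, and additionally τ-strongly convex with 0 < τ ≤ L. Then the gradient descent map g(x) = x - (2/(L+τ))∇F(x) is Lipschitz continuous with constant κ = (L - τ)/(L + τ) < 1. -/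
/-!
The key estimate is the strengthened monotonicity of the gradient of a `τ`-strongly convex,
`L`-smooth function:
`‖∇F x - ∇F y‖² + τ L ‖x - y‖² ≤ (L + τ) ⟪∇F x - ∇F y, x - y⟫`.
It is the co-coercivity (Baillon–Haddad) inequality for the convex function `F - τ/2 ‖·‖²`, whose
gradient satisfies the one-sided bound `⟪∇h a - ∇h b, a - b⟫ ≤ (L - τ) ‖a - b‖²`; co-coercivity
in turn comes from comparing the tangent plane at `x` with the descent lemma at `y`.
Expanding `‖g x - g y‖²` and inserting the key estimate, the step size `2 / (L + τ)` makes the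
inner-product terms cancel, leaving exactly `((L - τ) / (L + τ))² ‖x - y‖²`.
-/

open Set InnerProductSpace
open scoped RealInnerProductSpace

variable {E : Type*} [NormedAddCommGroup E] [InnerProductSpace ℝ E]

theorem norm_sub_smul_le_of_sq_norm_add_le_inner {τ L : ℝ} (hτL : τ ≤ L) (hLτ : 0 < L + τ)
    {u v : E} (h : ‖v‖ ^ 2 + τ * L * ‖u‖ ^ 2 ≤ (L + τ) * ⟪v, u⟫) :
    ‖u - (2 / (L + τ)) • v‖ ≤ (L - τ) / (L + τ) * ‖u‖ := by
  have hκ : 0 ≤ (L - τ) / (L + τ) := div_nonneg (sub_nonneg.2 hτL) hLτ.le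
  refine (pow_le_pow_iff_left₀ (norm_nonneg _) (mul_nonneg hκ (norm_nonneg u))
    two_ne_zero).1 ?_
  rw [norm_sub_sq_real, real_inner_smul_right, norm_smul, mul_pow, Real.norm_eq_abs, sq_abs,
    real_inner_comm]
  have hv : (2 / (L + τ)) ^ 2 * ‖v‖ ^ 2
      ≤ (2 / (L + τ)) ^ 2 * ((L + τ) * ⟪v, u⟫ - τ * L * ‖u‖ ^ 2) := by
    gcongr
    linarith
  have hLτ' := hLτ.ne'
  have hrhs : (2 / (L + τ)) ^ 2 * ((L + τ) * ⟪v, u⟫ - τ * L * ‖u‖ ^ 2)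
      = 2 * (2 / (L + τ) * ⟪v, u⟫) - 4 * τ * L / (L + τ) ^ 2 * ‖u‖ ^ 2 := by
    field_simp; ring
  have hκ_sq : ((L - τ) / (L + τ) * ‖u‖) ^ 2
      = ‖u‖ ^ 2 - 4 * τ * L / (L + τ) ^ 2 * ‖u‖ ^ 2 := by
    field_simp; ring
  linarith

variable [CompleteSpace E] {f : E → ℝ} {f' : E → E}

theorem HasGradientAt.hasDerivAt_add_smul {g x u : E} {t : ℝ}
    (hf : HasGradientAt f g (x + t • u)) :
    HasDerivAt (fun s : ℝ => f (x + s • u)) ⟪g, u⟫ t := by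
  have hline : HasDerivAt (fun s : ℝ => x + s • u) u t := by
    simpa using ((hasDerivAt_id t).smul_const u).const_add x
  have h := (hasGradientAt_iff_hasFDerivAt.mp hf).comp_hasDerivAt t hline
  rw [toDual_apply_apply] at h
  exact h

theorem HasGradientAt.sub_mul_sq_norm {g x : E} (hf : HasGradientAt f g x) (m : ℝ) :
    HasGradientAt (fun z => f z - m / 2 * ‖z‖ ^ 2) (g - m • x) x := by
  rw [hasGradientAt_iff_hasFDerivAt] at hf ⊢
  refine (hf.sub ((hasFDerivAt_id x).norm_sq.const_mul (m / 2))).congr_fderiv ?_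
  ext v
  simp only [id_eq, ContinuousLinearMap.comp_id, sub_apply, toDual_apply_apply, smul_apply,
    coe_innerSL_apply, nsmul_eq_mul, Nat.cast_ofNat, smul_eq_mul,
    map_sub, map_smul, sub_right_inj]
  ring

theorem ConvexOn.add_inner_sub_le {g x : E} (hc : ConvexOn ℝ univ f) (hf : HasGradientAt f g x)
    (y : E) : f x + ⟪g, y - x⟫ ≤ f y := by
  have hline : ConvexOn ℝ univ fun t : ℝ => f (x + t • (y - x)) := by
    simpa [Function.comp_def, AffineMap.lineMap_apply, add_comm]
      using hc.comp_affineMap (AffineMap.lineMap x y : ℝ →ᵃ[ℝ] E)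
  have hslope := hline.le_slope_of_hasDerivAt (mem_univ 0) (mem_univ 1) one_pos
    (HasGradientAt.hasDerivAt_add_smul (by simpa using hf))
  simp only [slope_def_field, one_smul, add_sub_cancel, zero_smul, add_zero, sub_zero,
    div_one] at hslope
  linarith

theorem ConvexOn.inner_sub_sub_nonneg (hc : ConvexOn ℝ univ f)
    (hf : ∀ z, HasGradientAt f (f' z) z) (x y : E) : 0 ≤ ⟪f' x - f' y, x - y⟫ := by
  have hx := hc.add_inner_sub_le (hf x) y
  have hy := hc.add_inner_sub_le (hf y) x
  rw [← neg_sub x y, inner_neg_right] at hx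
  rw [inner_sub_left]
  linarith

theorem le_add_inner_add_of_inner_sub_le {M : ℝ} (hf : ∀ z, HasGradientAt f (f' z) z)
    (hM : ∀ a b, ⟪f' a - f' b, a - b⟫ ≤ M * ‖a - b‖ ^ 2) (x y : E) :
    f y ≤ f x + ⟪f' x, y - x⟫ + M / 2 * ‖y - x‖ ^ 2 := by
  set u := y - x
  set ψ : ℝ → ℝ := fun t => f (x + t • u) - (t * ⟪f' x, u⟫ + M / 2 * ‖u‖ ^ 2 * t ^ 2)
  have hψ : ∀ t, HasDerivAt ψ (⟪f' (x + t • u) - f' x, u⟫ - M * ‖u‖ ^ 2 * t) t := by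
    intro t
    have hq := ((hasDerivAt_id t).mul_const ⟪f' x, u⟫).add
      ((hasDerivAt_pow 2 t).const_mul (M / 2 * ‖u‖ ^ 2))
    refine ((hf (x + t • u)).hasDerivAt_add_smul.sub hq).congr_deriv ?_
    rw [inner_sub_left]
    simp only [one_mul, Nat.cast_ofNat, Nat.add_one_sub_one, pow_one]
    ring
  have hψ_nonpos : ∀ t ∈ interior (Ici (0 : ℝ)),
      ⟪f' (x + t • u) - f' x, u⟫ - M * ‖u‖ ^ 2 * t ≤ 0 := by
    intro t ht
    rw [interior_Ici] at ht
    have h := hM (x + t • u) x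
    rw [add_sub_cancel_left, real_inner_smul_right, norm_smul,
      Real.norm_of_nonneg ht.out.le] at h
    nlinarith [ht.out]
  have hanti := antitoneOn_of_hasDerivWithinAt_nonpos (convex_Ici 0)
    (fun t _ => (hψ t).continuousAt.continuousWithinAt) (fun t _ => (hψ t).hasDerivWithinAt)
    hψ_nonpos
  have hψ_one_le : ψ 1 ≤ ψ 0 := hanti (mem_Ici.2 le_rfl) (mem_Ici.2 zero_le_one) zero_le_one
  simp only [ψ, u, one_smul, zero_smul, add_zero, add_sub_cancel] at hψ_one_le
  linarith

theorem ConvexOn.add_inner_add_sq_norm_div_le {M : ℝ} (hM₀ : 0 < M) (hc : ConvexOn ℝ univ f)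
    (hf : ∀ z, HasGradientAt f (f' z) z) (hM : ∀ a b, ⟪f' a - f' b, a - b⟫ ≤ M * ‖a - b‖ ^ 2)
    (x y : E) : f x + ⟪f' x, y - x⟫ + ‖f' y - f' x‖ ^ 2 / (2 * M) ≤ f y := by
  set w := f' y - f' x
  -- `z` is the gradient step from `y` for `f - ⟪f' x, ·⟫`, whose minimum is attained at `x`
  set z := y - M⁻¹ • w
  have hlower := hc.add_inner_sub_le (hf x) z
  have hupper := le_add_inner_add_of_inner_sub_le hf hM y z
  have hzy : z - y = -(M⁻¹ • w) := by simp [z]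
  have hzx : z - x = (y - x) - M⁻¹ • w := by simp [z]; abel
  rw [hzy, inner_neg_right, real_inner_smul_right, norm_neg, norm_smul, mul_pow,
    Real.norm_of_nonneg (inv_nonneg.2 hM₀.le)] at hupper
  rw [hzx, inner_sub_right, real_inner_smul_right] at hlower
  have hw : M⁻¹ * ⟪f' y, w⟫ - M⁻¹ * ⟪f' x, w⟫ = M⁻¹ * ‖w‖ ^ 2 := by
    rw [← mul_sub, ← inner_sub_left, real_inner_self_eq_norm_sq]
  have hquad : M / 2 * (M⁻¹ ^ 2 * ‖w‖ ^ 2) = ‖w‖ ^ 2 / (2 * M) := by field_simp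
  have hhalf : M⁻¹ * ‖w‖ ^ 2 - ‖w‖ ^ 2 / (2 * M) = ‖w‖ ^ 2 / (2 * M) := by field_simp; ring
  linarith

theorem ConvexOn.sq_norm_sub_le_mul_inner {M : ℝ} (hM₀ : 0 < M) (hc : ConvexOn ℝ univ f)
    (hf : ∀ z, HasGradientAt f (f' z) z) (hM : ∀ a b, ⟪f' a - f' b, a - b⟫ ≤ M * ‖a - b‖ ^ 2)
    (x y : E) : ‖f' x - f' y‖ ^ 2 ≤ M * ⟪f' x - f' y, x - y⟫ := by
  have hxy := hc.add_inner_add_sq_norm_div_le hM₀ hf hM x y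
  have hyx := hc.add_inner_add_sq_norm_div_le hM₀ hf hM y x
  rw [norm_sub_rev, ← neg_sub x y, inner_neg_right] at hxy
  have hsum : ‖f' x - f' y‖ ^ 2 / M ≤ ⟪f' x - f' y, x - y⟫ := by
    have hhalf : ‖f' x - f' y‖ ^ 2 / M
        = ‖f' x - f' y‖ ^ 2 / (2 * M) + ‖f' x - f' y‖ ^ 2 / (2 * M) := by
      field_simp; ring
    rw [inner_sub_left]
    linarith
  rwa [div_le_iff₀' hM₀] at hsum

theorem StrongConvexOn.sq_norm_sub_add_mul_sq_norm_le_inner {τ L : ℝ}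
    (hconv : StrongConvexOn univ τ f) (hf : ∀ z, HasGradientAt f (f' z) z)
    (hlip : ∀ x y, ‖f' x - f' y‖ ≤ L * ‖x - y‖) (hτ : 0 ≤ τ) (hτL : τ ≤ L) (x y : E) :
    ‖f' x - f' y‖ ^ 2 + τ * L * ‖x - y‖ ^ 2 ≤ (L + τ) * ⟪f' x - f' y, x - y⟫ := by
  have hconv' := strongConvexOn_iff_convex.mp hconv
  have hf' : ∀ z, HasGradientAt (fun z => f z - τ / 2 * ‖z‖ ^ 2) (f' z - τ • z) z :=
    fun z => (hf z).sub_mul_sq_norm τ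
  have hsub : ∀ a b, f' a - τ • a - (f' b - τ • b) = (f' a - f' b) - τ • (a - b) := by
    intro a b; rw [smul_sub]; abel
  have hinner : ∀ a b, ⟪(f' a - f' b) - τ • (a - b), a - b⟫
      = ⟪f' a - f' b, a - b⟫ - τ * ‖a - b‖ ^ 2 := by
    intro a b; rw [inner_sub_left, real_inner_smul_left, real_inner_self_eq_norm_sq]
  have hmono := hconv'.inner_sub_sub_nonneg hf' x y
  rw [hsub, hinner] at hmono
  rcases hτL.eq_or_lt with rfl | hlt
  · have hv : ‖f' x - f' y‖ ^ 2 ≤ (τ * ‖x - y‖) ^ 2 :=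
      pow_le_pow_left₀ (norm_nonneg _) (hlip x y) 2
    nlinarith [mul_nonneg hτ hmono]
  · have hub : ∀ a b, ⟪f' a - τ • a - (f' b - τ • b), a - b⟫ ≤ (L - τ) * ‖a - b‖ ^ 2 := by
      intro a b
      rw [hsub, hinner]
      nlinarith [real_inner_le_norm (f' a - f' b) (a - b), hlip a b, norm_nonneg (a - b)]
    have hcoco := hconv'.sq_norm_sub_le_mul_inner (sub_pos.2 hlt) hf' hub x y
    rw [hsub, hinner, norm_sub_sq_real, real_inner_smul_right, norm_smul, mul_pow,
      Real.norm_eq_abs, sq_abs] at hcoco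
    nlinarith

theorem stmt_19 (n : ℕ) (F : EuclideanSpace ℝ (Fin n) → ℝ)
    (F' : EuclideanSpace ℝ (Fin n) → EuclideanSpace ℝ (Fin n))
    (L τ : ℝ) (hτ : 0 < τ) (hτL : τ ≤ L)
    (hgrad : ∀ x, HasGradientAt F (F' x) x)
    (hlip : ∀ x y, ‖F' x - F' y‖ ≤ L * ‖x - y‖)
    (hconv : StrongConvexOn Set.univ τ F)
    (g : EuclideanSpace ℝ (Fin n) → EuclideanSpace ℝ (Fin n))
    (hg : ∀ x, g x = x - (2 / (L + τ)) • F' x) :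
    (∀ x y, ‖g x - g y‖ ≤ ((L - τ) / (L + τ)) * ‖x - y‖) ∧
      (L - τ) / (L + τ) < 1 := by
  have hLτ : 0 < L + τ := by linarith
  refine ⟨fun x y => ?_, by rw [div_lt_one hLτ]; linarith⟩
  have hgxy : g x - g y = (x - y) - (2 / (L + τ)) • (F' x - F' y) := by
    rw [hg x, hg y, smul_sub]; abel
  rw [hgxy]
  exact norm_sub_smul_le_of_sq_norm_add_le_inner hτL hLτ
    (hconv.sq_norm_sub_add_mul_sq_norm_le_inner hgrad hlip hτ.le hτL x y)
end
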